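/- Each equivalence class of rotor configurations on G contains exactly one acyclic (equivalently, recurrent) rotor configuration; the unique acyclic configuration equivalent to ρ is eρ, where e is the identity element of the sandpile group S(G/T). -/

import Mathlib

open Function

/-- A strongly connected finite directed multigraph (self-loops and multiple arcs
allowed), given by source and head maps `src, head : E → V`, together with a nonempty
target set `T` and a rotor mechanism at each vertex: `next` is a cyclic ordering of
the arcs emanating from each vertex (it permutes the arcs, preserves the source, and
acts transitively on the arcs emanating from any fixed vertex). -/
structure RotorSystem (V E : Type) [Fintype V] [DecidableEq V] [Fintype E]
    [DecidableEq E] where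
  src : E → V
  head : E → V
  T : Finset V
  T_nonempty : T.Nonempty
  strongly_connected : ∀ v w : V,
    Relation.ReflTransGen (fun a b => ∃ e : E, src e = a ∧ head e = b) v w
  next : E → E
  next_src : ∀ e, src (next e) = src e
  next_bijective : Function.Bijective next
  next_cyclic : ∀ e e', src e = src e' → ∃ k : ℕ, next^[k] e = e'

namespace RotorSystem

variable {V E : Type} [Fintype V] [DecidableEq V] [Fintype E] [DecidableEq E]

/-- The set `V₀ = V - T` of non-target vertices. -/
abbrev V0 (S : RotorSystem V E) : Type := {v : V // v ∉ S.T}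

/-- A rotor configuration: each non-target vertex carries an arc emanating from it. -/
abbrev RConf (S : RotorSystem V E) : Type :=
  {ρ : S.V0 → E // ∀ v : S.V0, S.src (ρ v) = v.1}

/-- A particle configuration: a number of particles at each non-target vertex. -/
abbrev PConf (S : RotorSystem V E) : Type := S.V0 → ℕ

variable (S : RotorSystem V E)

/-- One step of a single particle's rotor walk: at a non-target vertex the rotor is
first progressed and the particle then moves along the new rotor arc; target vertices
absorb the particle. -/
def step (p : V × S.RConf) : V × S.RConf :=
  if h : p.1 ∈ S.T then p
  else
    (S.head (S.next (p.2.1 ⟨p.1, h⟩)),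
      ⟨Function.update p.2.1 ⟨p.1, h⟩ (S.next (p.2.1 ⟨p.1, h⟩)), by
        intro w
        rcases eq_or_ne w ⟨p.1, h⟩ with rfl | hw
        · rw [Function.update_self, S.next_src]
          exact p.2.2 ⟨p.1, h⟩
        · rw [Function.update_of_ne hw]
          exact p.2.2 w⟩)

open Classical in
/-- Route a single particle from `x` by rotor walk until it first reaches the target
set; the result is the pair (final position, final rotor configuration). -/
noncomputable def route (x : V) (ρ : S.RConf) : V × S.RConf :=
  if h : ∃ n, (S.step^[n] (x, ρ)).1 ∈ S.T then S.step^[Nat.find h] (x, ρ) else (x, ρ)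

/-- `t_x(ρ)`: the target vertex reached by a single particle started at `x` with
initial rotor configuration `ρ`. -/
noncomputable def tgt (x : V) (ρ : S.RConf) : V := (S.route x ρ).1

/-- The particle addition operator `E_v`: add one particle at `v` and route it to the
target set. -/
noncomputable def addAt (v : S.V0) (ρ : S.RConf) : S.RConf := (S.route v.1 ρ).2

/-- The action `σρ` of a particle configuration on a rotor configuration: place
`σ v` particles at each vertex `v` and route them all to the target set. -/
noncomputable def act (σ : S.PConf) (ρ : S.RConf) : S.RConf :=
  (Finset.univ : Finset S.V0).toList.foldr (fun v r => (S.addAt v)^[σ v] r) ρ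

/-- Equivalence of rotor configurations: `ρ ≡ ρ'` iff `σρ = σρ'` for some particle
configuration `σ`. -/
def REquiv (ρ ρ' : S.RConf) : Prop := ∃ σ : S.PConf, S.act σ ρ = S.act σ ρ'

/-- The outdegree `d(v)`. -/
def outdeg (v : V) : ℕ := (Finset.univ.filter fun e : E => S.src e = v).card

/-- The number `d(v,w)` of arcs from `v` to `w`. -/
def numArcs (v w : V) : ℕ :=
  (Finset.univ.filter fun e : E => S.src e = v ∧ S.head e = w).card

/-- A particle configuration is stable if every non-target vertex holds at most
`d(v) - 1` particles. -/
def IsStable (σ : S.PConf) : Prop := ∀ v : S.V0, σ v < S.outdeg v.1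

/-- Parallel toppling: every unstable vertex topples once, sending one particle along
each arc emanating from it. -/
def toppleStep (σ : S.PConf) : S.PConf := fun v =>
  (if S.outdeg v.1 ≤ σ v then σ v - S.outdeg v.1 else σ v) +
    ∑ w : S.V0, (if S.outdeg w.1 ≤ σ w then S.numArcs w.1 v.1 else 0)

open Classical in
/-- The stabilization `σ°` of a particle configuration. -/
noncomputable def stabilize (σ : S.PConf) : S.PConf :=
  if h : ∃ n, S.IsStable (S.toppleStep^[n] σ) then S.toppleStep^[Nat.find h] σ else σ

/-- A stable particle configuration is recurrent if it is reachable (by adding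
particles and stabilizing) from every particle configuration.  The recurrent
configurations form the sandpile group `S(G/T)` under addition-then-stabilization. -/
def IsRecurrent (τ : S.PConf) : Prop :=
  S.IsStable τ ∧ ∀ σ : S.PConf, ∃ τ' : S.PConf, τ = S.stabilize (τ' + σ)

/-- `e` is the identity element of the sandpile group `S(G/T)`. -/
def IsSandpileIdentity (e : S.PConf) : Prop :=
  S.IsRecurrent e ∧ ∀ τ : S.PConf, S.IsRecurrent τ → S.stabilize (e + τ) = τ

/-- The rotor arcs of `ρ`, as a relation on vertices. -/
def rotorRel (ρ : S.RConf) (a b : V) : Prop :=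
  ∃ h : a ∉ S.T, S.head (ρ.1 ⟨a, h⟩) = b

/-- A rotor configuration is acyclic if its rotor arcs contain no directed cycle. -/
def IsAcyclicConf (ρ : S.RConf) : Prop :=
  ∀ v : V, ¬ Relation.TransGen (S.rotorRel ρ) v v

/-- `ρ'` is obtained from `ρ` by pushing a cycle: there are distinct non-target
vertices `v_0, …, v_{r-1}` with the rotor arc of `v_j` pointing to `v_{j+1}`
(cyclically); each such rotor is regressed one step, other rotors are unchanged. -/
def IsCyclePush (ρ ρ' : S.RConf) : Prop :=
  ∃ r : ℕ, 0 < r ∧ ∃ f : ZMod r → S.V0, Function.Injective f ∧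
    (∀ j : ZMod r, S.head (ρ.1 (f j)) = (f (j + 1)).1) ∧
    (∀ j : ZMod r, S.next (ρ'.1 (f j)) = ρ.1 (f j)) ∧
    (∀ v : S.V0, v ∉ Set.range f → ρ'.1 v = ρ.1 v)

end RotorSystem

/-!
Chips and rotors evolve together: a vertex holding a chip may fire, advancing its rotor and
sending the chip along the new rotor arc. Firings at distinct vertices commute, so by the
Church–Rosser property all firing sequences that remove every chip end in the same rotor
configuration. Routing particles one at a time is such a sequence, and so is toppling, during
which rotors make full turns; hence `(σ + τ)ρ = τ(σρ)` and `σ°ρ = σρ`.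

Firing never creates a rotor cycle through chip-free vertices only, so `eρ = (τ + 1)°ρ` is
acyclic. Since `(e + e)° = e`, we can write `e = Δm`; for acyclic `ρ` every `v` can then fire
exactly `d(v) m(v)` times starting from `(e, ρ)`, which turns each rotor full circle, so
`eρ = ρ`. Finally `e = (τ + σ)°` for every `σ`, so `σρ = σρ'` forces `eρ = eρ'`.
-/

open Relation Finset

theorem Relation.transGen_self_of_imp_or_terminal {α : Type*} {r r' : α → α → Prop}
    (h : ∀ a b, r' a b → r a b ∨ ∀ c, ¬ r' b c) {x : α} (hx : TransGen r' x x) :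
    TransGen r x x := by
  have key : ∀ a b, TransGen r' a b → (∃ c, r' b c) → TransGen r a b := by
    intro a b hab
    induction hab with
    | single hab => exact fun ⟨c, hc⟩ => .single ((h _ _ hab).resolve_right fun hb => hb c hc)
    | tail _ hbc ih =>
      exact fun ⟨d, hd⟩ => (ih ⟨_, hbc⟩).tail ((h _ _ hbc).resolve_right fun hb => hb d hd)
  obtain ⟨c, hc, -⟩ := TransGen.head'_iff.1 hx
  exact key x x hx ⟨c, hc⟩

namespace RotorSystem

variable {V E : Type} [Fintype V] [DecidableEq V] [Fintype E] [DecidableEq E]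
variable (S : RotorSystem V E)

/-! ### Rotor orbits -/

theorem src_iterate_next (a : E) (k : ℕ) : S.src (S.next^[k] a) = S.src a := by
  induction k with
  | zero => rfl
  | succ k ih => rw [iterate_succ_apply', S.next_src, ih]

theorem minimalPeriod_next_pos (a : E) : 0 < minimalPeriod S.next a :=
  minimalPeriod_pos_of_mem_periodicPts <|
    (injective_iff_periodicPts_eq_univ.mp S.next_bijective.1).symm ▸ Set.mem_univ a

theorem injOn_iterate_next (a : E) :
    Set.InjOn (S.next^[·] a) (range (minimalPeriod S.next a)) := by
  rw [coe_range]
  exact iterate_injOn_Iio_minimalPeriod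

theorem image_iterate_next_range (a : E) :
    (range (minimalPeriod S.next a)).image (S.next^[·] a) = univ.filter (S.src · = S.src a) := by
  ext b
  simp only [mem_image, mem_range, mem_filter, mem_univ, true_and]
  constructor
  · rintro ⟨k, -, rfl⟩
    exact S.src_iterate_next a k
  · intro hb
    obtain ⟨k, rfl⟩ := S.next_cyclic a b hb.symm
    exact ⟨_, Nat.mod_lt k (S.minimalPeriod_next_pos a), iterate_mod_minimalPeriod_eq⟩

theorem minimalPeriod_next (a : E) : minimalPeriod S.next a = S.outdeg (S.src a) := by
  rw [outdeg, ← S.image_iterate_next_range, card_image_of_injOn (S.injOn_iterate_next a),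
    card_range]

theorem iterate_outdeg_mul {a : E} {x : V} (ha : S.src a = x) (m : ℕ) :
    S.next^[S.outdeg x * m] a = a := by
  rw [iterate_mul, ← ha, ← minimalPeriod_next]
  exact iterate_fixed iterate_minimalPeriod m

theorem outdeg_dvd_of_iterate_eq {a : E} {k : ℕ} (h : S.next^[k] a = a) :
    S.outdeg (S.src a) ∣ k := by
  rw [← minimalPeriod_next]
  exact IsPeriodicPt.minimalPeriod_dvd h

/-- Chips sent to `v` by `k` firings of a vertex whose rotor starts at `a`; each firing
advances the rotor before moving the chip. -/
def sent (a : E) (v : V) (k : ℕ) : ℕ :=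
  ∑ i ∈ range k, if S.head (S.next^[i + 1] a) = v then 1 else 0

@[simp] theorem sent_zero (a : E) (v : V) : S.sent a v 0 = 0 := rfl

theorem sent_succ (a : E) (v : V) (k : ℕ) :
    S.sent a v (k + 1) = S.sent a v k + if S.head (S.next^[k + 1] a) = v then 1 else 0 :=
  sum_range_succ _ _

theorem sent_add (a : E) (v : V) (k j : ℕ) :
    S.sent a v (k + j) = S.sent a v k + S.sent (S.next^[k] a) v j := by
  rw [sent, sum_range_add]
  congr 1
  refine sum_congr rfl fun i _ => ?_
  rw [← iterate_add_apply, show i + 1 + k = k + i + 1 by omega]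

theorem sent_outdeg {a : E} {x : V} (ha : S.src a = x) (v : V) :
    S.sent a v (S.outdeg x) = S.numArcs x v := by
  have himage := S.image_iterate_next_range (S.next a)
  rw [minimalPeriod_next, S.next_src, ha] at himage
  rw [numArcs, ← filter_filter, ← himage, card_filter,
    sum_image (S.injOn_iterate_next (S.next a) |>.mono ?_)]
  · simp only [sent, iterate_succ_apply]
    rfl
  · rw [minimalPeriod_next, S.next_src, ha]

theorem sent_outdeg_mul {a : E} {x : V} (ha : S.src a = x) (v : V) (m : ℕ) :
    S.sent a v (S.outdeg x * m) = m * S.numArcs x v := by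
  induction m with
  | zero => simp
  | succ m ih => rw [Nat.mul_succ, sent_add, ih, S.iterate_outdeg_mul ha, sent_outdeg _ ha,
      Nat.succ_mul]

theorem sum_sent_eq_sum_card (s : Finset S.V0) (a : E) (k : ℕ) :
    ∑ v ∈ s, S.sent a v.1 k =
      ∑ i ∈ range k, #(s.filter fun v => S.head (S.next^[i + 1] a) = v.1) := by
  simp only [sent, card_filter]
  exact sum_comm

theorem card_filter_head_eq_le_one (s : Finset S.V0) (x : V) :
    #(s.filter fun v => x = v.1) ≤ 1 :=
  card_le_one.2 fun v hv w hw => Subtype.ext <| by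
    rw [(mem_filter.1 hv).2.symm, (mem_filter.1 hw).2]

theorem sum_sent_le (s : Finset S.V0) (a : E) (k : ℕ) : ∑ v ∈ s, S.sent a v.1 k ≤ k := by
  rw [sum_sent_eq_sum_card]
  exact (sum_le_sum fun i _ => S.card_filter_head_eq_le_one s _).trans (by simp)

theorem exists_mem_head_eq_of_sum_sent_eq {s : Finset S.V0} {a : E} {k : ℕ} (hk : 0 < k)
    (h : ∑ v ∈ s, S.sent a v.1 k = k) : ∃ v ∈ s, S.head (S.next^[k] a) = v.1 := by
  rw [sum_sent_eq_sum_card] at h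
  conv_rhs at h => rw [← card_range k, card_eq_sum_ones]
  have hlast := (sum_eq_sum_iff_of_le fun i _ => S.card_filter_head_eq_le_one s _).1 h (k - 1)
    (mem_range.2 (by omega))
  obtain ⟨v, hv⟩ := card_pos.1 (hlast ▸ Nat.one_pos)
  rw [Nat.sub_add_cancel hk] at hv
  exact ⟨v, (mem_filter.1 hv).1, (mem_filter.1 hv).2⟩

/-! ### Firing and the abelian property -/

abbrev State : Type := S.PConf × S.RConf

def advance (v : S.V0) (ρ : S.RConf) : S.RConf :=
  ⟨update ρ.1 v (S.next (ρ.1 v)), fun w => by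
    rcases eq_or_ne w v with rfl | hw
    · rw [update_self, S.next_src]
      exact ρ.2 w
    · rw [update_of_ne hw]
      exact ρ.2 w⟩

theorem advance_apply (v u : S.V0) (ρ : S.RConf) :
    (S.advance v ρ).1 u = if u = v then S.next (ρ.1 v) else ρ.1 u := by
  rcases eq_or_ne u v with rfl | h
  · simp [advance]
  · simp [advance, h]

def fire (v : S.V0) (s : S.State) : S.State :=
  (fun u => s.1 u - (if u = v then 1 else 0) + if S.head (S.next (s.2.1 v)) = u.1 then 1 else 0,
    S.advance v s.2)

def Fires (s t : S.State) : Prop := ∃ v, 0 < s.1 v ∧ S.fire v s = t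

variable {S}

theorem le_fire_fst_of_ne {u v : S.V0} (s : S.State) (huv : u ≠ v) :
    s.1 u ≤ (S.fire v s).1 u := by
  simp only [fire, if_neg huv]
  omega

theorem fire_comm {u v : S.V0} {s : S.State} (huv : u ≠ v) (hu : 0 < s.1 u)
    (hv : 0 < s.1 v) : S.fire u (S.fire v s) = S.fire v (S.fire u s) := by
  have hru : (S.advance v s.2).1 u = s.2.1 u := by rw [advance_apply, if_neg huv]
  have hrv : (S.advance u s.2).1 v = s.2.1 v := by rw [advance_apply, if_neg huv.symm]
  refine Prod.ext (funext fun w => ?_) (Subtype.ext ?_)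
  · simp only [fire, hru, hrv]
    split_ifs <;> simp_all <;> omega
  · simp only [fire, advance, update_of_ne huv, update_of_ne huv.symm]
    exact update_comm huv.symm _ _ _

theorem fires_confluent {s t₁ t₂ : S.State} (h₁ : ReflTransGen S.Fires s t₁)
    (h₂ : ReflTransGen S.Fires s t₂) : Join (ReflTransGen S.Fires) t₁ t₂ := by
  refine church_rosser (fun s _ _ => ?_) h₁ h₂
  rintro ⟨u, hu, rfl⟩ ⟨v, hv, rfl⟩
  rcases eq_or_ne u v with rfl | huv
  · exact ⟨_, .refl, .refl⟩
  · exact ⟨S.fire v (S.fire u s), .single ⟨v, hv.trans_le (le_fire_fst_of_ne s huv.symm), rfl⟩,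
      .single ⟨u, hu.trans_le (le_fire_fst_of_ne s huv), fire_comm huv hu hv⟩⟩

theorem not_fires_zero (ρ : S.RConf) (t : S.State) : ¬ S.Fires (0, ρ) t :=
  fun ⟨_, hv, _⟩ => hv.ne' rfl

theorem eq_of_reach_zero {s : S.State} {ρ₁ ρ₂ : S.RConf}
    (h₁ : ReflTransGen S.Fires s (0, ρ₁)) (h₂ : ReflTransGen S.Fires s (0, ρ₂)) : ρ₁ = ρ₂ := by
  obtain ⟨t, h₁t, h₂t⟩ := fires_confluent h₁ h₂
  have terminal : ∀ ρ, ReflTransGen S.Fires (0, ρ) t → (0, ρ) = t := fun ρ h =>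
    h.cases_head.resolve_right fun ⟨_, hc, _⟩ => not_fires_zero ρ _ hc
  exact congrArg Prod.snd ((terminal ρ₁ h₁t).trans (terminal ρ₂ h₂t).symm)

theorem fire_add_chips {v : S.V0} {s : S.State} (c : S.PConf) (hv : 0 < s.1 v) :
    S.fire v (s.1 + c, s.2) = ((S.fire v s).1 + c, (S.fire v s).2) := by
  refine Prod.ext (funext fun u => ?_) rfl
  simp only [fire, Pi.add_apply]
  split_ifs <;> simp_all <;> omega

theorem reach_add_chips {σ σ' : S.PConf} {ρ ρ' : S.RConf} (c : S.PConf)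
    (h : ReflTransGen S.Fires (σ, ρ) (σ', ρ')) : ReflTransGen S.Fires (σ + c, ρ) (σ' + c, ρ') :=
  h.lift (fun s => (s.1 + c, s.2)) fun _ _ ⟨v, hv, hst⟩ =>
    ⟨v, hv.trans_le (Nat.le_add_right _ _), hst ▸ fire_add_chips c hv⟩

/-! ### Odometers and the Laplacian -/

variable (S) in
/-- The rotors and chips of `t` are those of `s` after `n v` firings of each `v`. -/
def IsOdometer (s : S.State) (n : S.PConf) (t : S.State) : Prop :=
  (∀ v, t.2.1 v = S.next^[n v] (s.2.1 v)) ∧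
    ∀ v, t.1 v + n v = s.1 v + ∑ w, S.sent (s.2.1 w) v.1 (n w)

variable (S) in
/-- `τ = σ - Δ m` for the Laplacian `Δ` of `G` restricted to `V₀`, written without
subtraction. -/
def TopplesTo (σ m τ : S.PConf) : Prop :=
  ∀ v, τ v + S.outdeg v.1 * m v = σ v + ∑ w, m w * S.numArcs w.1 v.1

theorem isOdometer_zero (s : S.State) : S.IsOdometer s 0 s :=
  ⟨fun _ => rfl, fun _ => by simp⟩

theorem IsOdometer.fire {s t : S.State} {n : S.PConf} {v : S.V0}
    (h : S.IsOdometer s n t) (hv : 0 < t.1 v) :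
    S.IsOdometer s (n + Pi.single v 1) (S.fire v t) := by
  have hsum : ∀ u : S.V0, ∑ w, S.sent (s.2.1 w) u.1 ((n + Pi.single v 1 : S.PConf) w) =
      ∑ w, S.sent (s.2.1 w) u.1 (n w) +
        if S.head (S.next^[n v + 1] (s.2.1 v)) = u.1 then 1 else 0 := fun u => by
    have hw : ∀ w, S.sent (s.2.1 w) u.1 ((n + Pi.single v 1 : S.PConf) w) =
        S.sent (s.2.1 w) u.1 (n w) +
          if w = v then (if S.head (S.next^[n v + 1] (s.2.1 v)) = u.1 then 1 else 0) else 0 := by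
      intro w
      rcases eq_or_ne w v with rfl | hw
      · simp [sent_succ]
      · simp [hw]
    rw [sum_congr rfl fun w _ => hw w, sum_add_distrib, sum_ite_eq', if_pos (mem_univ v)]
  refine ⟨fun u => ?_, fun u => ?_⟩
  · rcases eq_or_ne u v with rfl | hu
    · simp [RotorSystem.fire, advance_apply, h.1, iterate_succ_apply']
    · simp [RotorSystem.fire, advance_apply, h.1, hu]
  · have hu := h.2 u
    rw [hsum]
    simp only [RotorSystem.fire, Pi.add_apply, Pi.single_apply, h.1 v,
      ← iterate_succ_apply' S.next]
    split_ifs <;> simp_all <;> omega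

theorem exists_isOdometer_of_transGen {s t : S.State} (h : TransGen S.Fires s t) :
    ∃ n ≠ 0, S.IsOdometer s n t := by
  have single_ne_zero : ∀ (n : S.PConf) (v : S.V0), n + Pi.single v 1 ≠ 0 := fun n v h => by
    simpa using congrFun h v
  induction h with
  | single hst =>
    obtain ⟨v, hv, rfl⟩ := hst
    exact ⟨_, single_ne_zero 0 v, (isOdometer_zero s).fire hv⟩
  | tail _ hst ih =>
    obtain ⟨n, -, hn⟩ := ih
    obtain ⟨v, hv, rfl⟩ := hst
    exact ⟨_, single_ne_zero n v, hn.fire hv⟩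

variable (S) in
theorem sum_numArcs_eq_card (x : V) :
    ∑ v : S.V0, S.numArcs x v.1 = #(univ.filter fun a => S.src a = x ∧ S.head a ∉ S.T) := by
  simp only [numArcs, card_filter]
  rw [sum_comm]
  refine sum_congr rfl fun a _ => ?_
  by_cases ha : S.head a ∈ S.T
  · refine (sum_eq_zero fun v _ => if_neg fun h => v.2 (h.2 ▸ ha)).trans (if_neg (by tauto)).symm
  · rw [sum_eq_single ⟨S.head a, ha⟩ (fun v _ hv => if_neg fun h => hv (Subtype.ext h.2.symm))
      (by simp)]
    simp [ha]

variable (S) in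
theorem sum_numArcs_le (x : V) : ∑ v : S.V0, S.numArcs x v.1 ≤ S.outdeg x := by
  rw [sum_numArcs_eq_card, outdeg]
  exact card_le_card fun a ha => by simp_all

theorem sum_numArcs_lt {a : E} (ha : S.head a ∈ S.T) :
    ∑ v : S.V0, S.numArcs (S.src a) v.1 < S.outdeg (S.src a) := by
  rw [sum_numArcs_eq_card, outdeg]
  refine card_lt_card ⟨fun b hb => by simp_all, fun h => ?_⟩
  simpa [ha] using h (mem_filter.2 ⟨mem_univ a, rfl⟩)

/-- Summing the equations over `V₀` shows that no arc from the support of `m` leaves `V₀`. -/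
theorem head_notMem_of_topplesTo_zero {m : S.PConf} (hm : S.TopplesTo 0 m 0) {w : S.V0}
    (hw : 0 < m w) {a : E} (ha : S.src a = w.1) : S.head a ∉ S.T := by
  intro haT
  have hle : ∀ u ∈ univ, m u * ∑ v : S.V0, S.numArcs u.1 v.1 ≤ S.outdeg u.1 * m u :=
    fun u _ => by rw [mul_comm]; exact Nat.mul_le_mul_right _ (S.sum_numArcs_le u.1)
  have heq : ∑ u, m u * ∑ v : S.V0, S.numArcs u.1 v.1 = ∑ u, S.outdeg u.1 * m u := by
    rw [sum_congr rfl fun v _ => (by simpa using hm v :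
      S.outdeg v.1 * m v = ∑ u, m u * S.numArcs u.1 v.1)]
    simp only [mul_sum]
    exact sum_comm
  have hw' := (sum_eq_sum_iff_of_le hle).1 heq w (mem_univ w)
  have hlt := sum_numArcs_lt haT
  rw [ha, ← Nat.mul_lt_mul_left hw] at hlt
  rw [hw', mul_comm] at hlt
  exact lt_irrefl _ hlt

theorem pos_of_topplesTo_zero {m : S.PConf} (hm : S.TopplesTo 0 m 0) {w v : S.V0}
    (hw : 0 < m w) {a : E} (ha : S.src a = w.1) (hv : S.head a = v.1) : 0 < m v := by
  have harc : 0 < S.numArcs w.1 v.1 := card_pos.2 ⟨a, by simp [ha, hv]⟩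
  have hin : m w * S.numArcs w.1 v.1 ≤ S.outdeg v.1 * m v :=
    calc m w * S.numArcs w.1 v.1 ≤ ∑ u, m u * S.numArcs u.1 v.1 :=
          single_le_sum (f := fun u => m u * S.numArcs u.1 v.1) (fun _ _ => Nat.zero_le _)
            (mem_univ w)
      _ = S.outdeg v.1 * m v := by simpa using (hm v).symm
  exact Nat.pos_of_mul_pos_left ((Nat.mul_pos hw harc).trans_le hin)

theorem eq_zero_of_topplesTo_zero {m : S.PConf} (hm : S.TopplesTo 0 m 0) : m = 0 := by
  by_contra! hne
  obtain ⟨w, hw⟩ := Function.ne_iff.1 hne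
  obtain ⟨t, ht⟩ := S.T_nonempty
  have closed : ∀ y, ReflTransGen (fun a b => ∃ e, S.src e = a ∧ S.head e = b) w.1 y →
      ∃ h : y ∉ S.T, 0 < m ⟨y, h⟩ := by
    intro y hy
    induction hy with
    | refl => exact ⟨w.2, Nat.pos_of_ne_zero hw⟩
    | tail _ hyz ih =>
      obtain ⟨h, hpos⟩ := ih
      obtain ⟨a, ha, rfl⟩ := hyz
      have hT := head_notMem_of_topplesTo_zero hm hpos (w := ⟨_, h⟩) ha
      exact ⟨hT, pos_of_topplesTo_zero hm hpos (v := ⟨_, hT⟩) ha rfl⟩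
  exact (closed t (S.strongly_connected w.1 t)).1 ht

theorem eq_zero_of_isOdometer_self {s : S.State} {n : S.PConf}
    (h : S.IsOdometer s n s) : n = 0 := by
  have hdvd : ∀ v, S.outdeg v.1 ∣ n v := fun v => by
    simpa [s.2.2 v] using S.outdeg_dvd_of_iterate_eq (h.1 v).symm
  choose m hm using hdvd
  have hbal : S.TopplesTo 0 m 0 := fun v => by
    have := h.2 v
    simp only [hm, S.sent_outdeg_mul (s.2.2 _)] at this
    simp only [Pi.zero_apply, zero_add]
    omega
  funext v
  simp [hm v, eq_zero_of_topplesTo_zero hbal]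

/-! ### Rotor walks and toppling as firing sequences -/

variable (S) in
def chipsAt (x : V) : S.PConf := fun u => if u.1 = x then 1 else 0

theorem chipsAt_of_mem {x : V} (hx : x ∈ S.T) : S.chipsAt x = 0 :=
  funext fun u => if_neg fun h : u.1 = x => u.2 (h ▸ hx)

theorem chipsAt_val (v : S.V0) : S.chipsAt v.1 = Pi.single v 1 := by
  funext u
  simp [chipsAt, Pi.single_apply, Subtype.ext_iff]

theorem step_of_mem {p : V × S.RConf} (h : p.1 ∈ S.T) : S.step p = p := dif_pos h

theorem fires_chipsAt_step {p : V × S.RConf} (h : p.1 ∉ S.T) :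
    S.Fires (S.chipsAt p.1, p.2) (S.chipsAt (S.step p).1, (S.step p).2) := by
  refine ⟨⟨p.1, h⟩, by simp [chipsAt], Prod.ext (funext fun u => ?_) ?_⟩
  · simp only [fire, chipsAt, step, dif_neg h]
    by_cases hu : u.1 = p.1
    · obtain rfl : u = ⟨p.1, h⟩ := Subtype.ext hu
      simp [eq_comm]
    · simp [hu, Subtype.ext_iff, eq_comm]
  · simp only [step, dif_neg h]
    rfl

theorem reach_chipsAt_iterate_step (p : V × S.RConf) (k : ℕ) :
    ReflTransGen S.Fires (S.chipsAt p.1, p.2) (S.chipsAt (S.step^[k] p).1, (S.step^[k] p).2) := by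
  induction k with
  | zero => rfl
  | succ k ih =>
    rw [iterate_succ_apply']
    by_cases h : (S.step^[k] p).1 ∈ S.T
    · rwa [step_of_mem h]
    · exact ih.tail (fires_chipsAt_step h)

/-- The walk is eventually periodic, and one period would be a nonzero firing odometer that
returns every chip and rotor to where it was. -/
theorem exists_iterate_step_mem (p : V × S.RConf) : ∃ n, (S.step^[n] p).1 ∈ S.T := by
  by_contra! hT
  obtain ⟨i, j, hij, hp⟩ := Finite.exists_ne_map_eq_of_infinite fun n => S.step^[n] p
  wlog hlt : i < j generalizing i j
  · exact this j i hij.symm hp.symm (lt_of_le_of_ne (not_lt.1 hlt) hij.symm)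
  have hback : S.step^[j - (i + 1)] (S.step (S.step^[i] p)) = S.step^[i] p := by
    rw [← iterate_succ_apply' S.step, ← iterate_add_apply, Nat.sub_add_cancel hlt]
    exact hp.symm
  have hcycle : TransGen S.Fires (S.chipsAt (S.step^[i] p).1, (S.step^[i] p).2)
      (S.chipsAt (S.step^[i] p).1, (S.step^[i] p).2) := by
    have hrest := reach_chipsAt_iterate_step (S.step (S.step^[i] p)) (j - (i + 1))
    rw [hback] at hrest
    exact .head' (fires_chipsAt_step (hT i)) hrest
  obtain ⟨n, hn, hq⟩ := exists_isOdometer_of_transGen hcycle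
  exact hn (eq_zero_of_isOdometer_self hq)

theorem reach_addAt (v : S.V0) (ρ : S.RConf) :
    ReflTransGen S.Fires (Pi.single v 1, ρ) (0, S.addAt v ρ) := by
  have hT := exists_iterate_step_mem (v.1, ρ)
  have h := reach_chipsAt_iterate_step (v.1, ρ) (Nat.find hT)
  rwa [chipsAt_of_mem (Nat.find_spec hT), chipsAt_val,
    show (S.step^[Nat.find hT] (v.1, ρ)).2 = S.addAt v ρ by rw [addAt, route, dif_pos hT]] at h

theorem reach_iterate_addAt (v : S.V0) (k : ℕ) (ρ : S.RConf) :
    ReflTransGen S.Fires (Pi.single v k, ρ) (0, (S.addAt v)^[k] ρ) := by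
  induction k generalizing ρ with
  | zero =>
    rw [Pi.single_zero]
    rfl
  | succ k ih =>
    rw [iterate_succ_apply, add_comm k, Pi.single_add]
    exact (reach_add_chips _ (reach_addAt v ρ)).trans (by simpa using ih (S.addAt v ρ))

theorem reach_act (σ : S.PConf) (ρ : S.RConf) : ReflTransGen S.Fires (σ, ρ) (0, S.act σ ρ) := by
  have key : ∀ L : List S.V0, ReflTransGen S.Fires ((L.map fun v => Pi.single v (σ v)).sum, ρ)
      (0, L.foldr (fun v r => (S.addAt v)^[σ v] r) ρ) := by
    intro L
    induction L with
    | nil => rfl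
    | cons v L ih =>
      rw [List.map_cons, List.sum_cons, add_comm]
      exact (reach_add_chips _ ih).trans (by simpa using reach_iterate_addAt v (σ v) _)
  have h := key univ.toList
  rwa [sum_map_toList, univ_sum_single] at h

theorem eq_act_of_reach {σ : S.PConf} {ρ ρ' : S.RConf}
    (h : ReflTransGen S.Fires (σ, ρ) (0, ρ')) : ρ' = S.act σ ρ :=
  eq_of_reach_zero h (reach_act σ ρ)

theorem act_add (σ τ : S.PConf) (ρ : S.RConf) : S.act (σ + τ) ρ = S.act τ (S.act σ ρ) :=
  (eq_act_of_reach <| (reach_add_chips τ (reach_act σ ρ)).trans <| by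
    simpa using reach_act τ (S.act σ ρ)).symm

theorem exists_reach_fire_iterate (s : S.State) (v : S.V0) {k : ℕ} (hk : k ≤ s.1 v) :
    ∃ t, ReflTransGen S.Fires s t ∧ S.IsOdometer s (Pi.single v k) t := by
  induction k with
  | zero => exact ⟨s, .refl, by simpa using isOdometer_zero s⟩
  | succ k ih =>
    obtain ⟨t, hst, ht⟩ := ih (by omega)
    have hpos : 0 < t.1 v := by
      have := ht.2 v
      simp only [Pi.single_eq_same] at this
      omega
    refine ⟨S.fire v t, hst.tail ⟨v, hpos, rfl⟩, ?_⟩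
    simpa [← Pi.single_add] using ht.fire hpos

/-- Toppling `v` is `d(v)` firings of `v`: its rotor makes one full turn. -/
theorem exists_reach_topple {s : S.State} {v : S.V0} (hv : S.outdeg v.1 ≤ s.1 v) :
    ∃ τ, ReflTransGen S.Fires s (τ, s.2) ∧
      ∀ u, τ u + (if u = v then S.outdeg v.1 else 0) = s.1 u + S.numArcs v.1 u.1 := by
  obtain ⟨t, hst, hrot, hchips⟩ := exists_reach_fire_iterate s v hv
  have ht : t.2 = s.2 := Subtype.ext <| funext fun u => by
    rw [hrot u]
    rcases eq_or_ne u v with rfl | hu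
    · simpa using S.iterate_outdeg_mul (s.2.2 u) 1
    · simp [hu]
  refine ⟨t.1, ht ▸ hst, fun u => ?_⟩
  have h := hchips u
  rw [sum_eq_single v (fun w _ hw => by simp [hw]) (by simp), Pi.single_eq_same,
    S.sent_outdeg (s.2.2 v)] at h
  rw [← h, Pi.single_apply]

theorem exists_reach_topple_finset (σ : S.PConf) (ρ : S.RConf) (U : Finset S.V0)
    (hU : ∀ v ∈ U, S.outdeg v.1 ≤ σ v) :
    ∃ τ, ReflTransGen S.Fires (σ, ρ) (τ, ρ) ∧
      ∀ u, τ u + (if u ∈ U then S.outdeg u.1 else 0) = σ u + ∑ w ∈ U, S.numArcs w.1 u.1 := by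
  induction U using Finset.induction_on with
  | empty => exact ⟨σ, .refl, by simp⟩
  | insert a U ha ih =>
    obtain ⟨τ, hτ, hτσ⟩ := ih fun v hv => hU v (mem_insert_of_mem hv)
    have hstable : S.outdeg a.1 ≤ τ a := by
      have := hτσ a
      have := hU a (mem_insert_self a U)
      simp only [ha, if_false] at *
      omega
    obtain ⟨τ', hτ', hτ'τ⟩ := exists_reach_topple (s := (τ, ρ)) hstable
    refine ⟨τ', hτ.trans hτ', fun u => ?_⟩
    have h₁ := hτσ u
    have h₂ := hτ'τ u
    rw [sum_insert ha]
    by_cases hu : u = a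
    · subst hu
      simp only [ha, mem_insert_self, if_true, if_false] at *
      omega
    · simp only [hu, mem_insert, false_or, if_false] at *
      split_ifs at * <;> omega

theorem reach_toppleStep (σ : S.PConf) (ρ : S.RConf) :
    ReflTransGen S.Fires (σ, ρ) (S.toppleStep σ, ρ) := by
  obtain ⟨τ, hτ, hτσ⟩ :=
    exists_reach_topple_finset σ ρ (univ.filter fun v => S.outdeg v.1 ≤ σ v) (by simp)
  convert hτ
  funext u
  have := hτσ u
  simp only [toppleStep, ← sum_filter, mem_filter, mem_univ, true_and] at this ⊢
  split_ifs at * <;> omega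

theorem reach_stabilize (σ : S.PConf) (ρ : S.RConf) :
    ReflTransGen S.Fires (σ, ρ) (S.stabilize σ, ρ) := by
  have reach_iterate : ∀ n, ReflTransGen S.Fires (σ, ρ) (S.toppleStep^[n] σ, ρ) := fun n => by
    induction n with
    | zero => rfl
    | succ n ih => exact iterate_succ_apply' S.toppleStep n σ ▸ ih.trans (reach_toppleStep _ ρ)
  unfold stabilize
  split_ifs
  exacts [reach_iterate _, .refl]

theorem act_stabilize (σ : S.PConf) (ρ : S.RConf) : S.act (S.stabilize σ) ρ = S.act σ ρ :=
  eq_act_of_reach ((reach_stabilize σ ρ).trans (reach_act _ ρ))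

theorem TopplesTo.trans {σ m τ m' τ' : S.PConf} (h : S.TopplesTo σ m τ)
    (h' : S.TopplesTo τ m' τ') : S.TopplesTo σ (m + m') τ' := fun v => by
  have h₁ := h v
  have h₂ := h' v
  simp only [Pi.add_apply, mul_add, add_mul, sum_add_distrib]
  omega

theorem topplesTo_toppleStep (σ : S.PConf) :
    S.TopplesTo σ (fun v => if S.outdeg v.1 ≤ σ v then 1 else 0) (S.toppleStep σ) := fun v => by
  simp only [toppleStep, ite_mul, one_mul, zero_mul]
  split_ifs <;> omega

theorem exists_topplesTo_stabilize (σ : S.PConf) : ∃ m, S.TopplesTo σ m (S.stabilize σ) := by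
  have iterate : ∀ n, ∃ m, S.TopplesTo σ m (S.toppleStep^[n] σ) := fun n => by
    induction n with
    | zero => exact ⟨0, fun v => by simp⟩
    | succ n ih =>
      obtain ⟨m, hm⟩ := ih
      exact ⟨_, iterate_succ_apply' S.toppleStep n σ ▸ hm.trans (topplesTo_toppleStep _)⟩
  unfold stabilize
  split_ifs
  exacts [iterate _, ⟨0, fun v => by simp⟩]

/-! ### Acyclicity -/

variable (S) in
def chipFreeRotorRel (s : S.State) (a b : V) : Prop :=
  S.rotorRel s.2 a b ∧ ∀ h : a ∉ S.T, s.1 ⟨a, h⟩ = 0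

/-- The new rotor arc at `v` ends at the vertex that has just received a chip. -/
theorem chipFreeRotorRel_fire {s : S.State} {v : S.V0} (hv : 0 < s.1 v) (a b : V)
    (hab : S.chipFreeRotorRel (S.fire v s) a b) :
    S.chipFreeRotorRel s a b ∨ ∀ c, ¬ S.chipFreeRotorRel (S.fire v s) b c := by
  obtain ⟨⟨ha, hab⟩, hfree⟩ := hab
  by_cases hav : (⟨a, ha⟩ : S.V0) = v
  · subst hav
    refine Or.inr fun c ⟨⟨hb, _⟩, hbfree⟩ => ?_
    have := hbfree hb
    simp only [fire, advance_apply, if_true] at hab this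
    split_ifs at this
  · refine Or.inl ⟨⟨ha, ?_⟩, fun h => ?_⟩
    · simpa [fire, advance_apply, hav] using hab
    · exact Nat.eq_zero_of_le_zero (hfree h ▸ le_fire_fst_of_ne s hav)

theorem isAcyclicConf_of_reach_of_pos {σ : S.PConf} {ρ ρ' : S.RConf} (hσ : ∀ v, 0 < σ v)
    (h : ReflTransGen S.Fires (σ, ρ) (0, ρ')) : S.IsAcyclicConf ρ' := by
  have invariant : ∀ t, ReflTransGen S.Fires (σ, ρ) t →
      ∀ x, ¬ TransGen (S.chipFreeRotorRel t) x x := by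
    intro t ht
    induction ht with
    | refl =>
      intro x hx
      obtain ⟨c, ⟨⟨hx, -⟩, hfree⟩, -⟩ := TransGen.head'_iff.1 hx
      exact (hσ _).ne' (hfree hx)
    | tail _ hst ih =>
      obtain ⟨v, hv, rfl⟩ := hst
      exact fun x hx => ih x (transGen_self_of_imp_or_terminal (chipFreeRotorRel_fire hv) hx)
  have hfree : S.chipFreeRotorRel (0, ρ') = S.rotorRel ρ' := by
    funext a b
    simp [chipFreeRotorRel]
  exact fun x => hfree ▸ invariant _ h x

theorem isAcyclicConf_act_of_pos {σ : S.PConf} (hσ : ∀ v, 0 < σ v) (ρ : S.RConf) :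
    S.IsAcyclicConf (S.act σ ρ) :=
  isAcyclicConf_of_reach_of_pos hσ (reach_act σ ρ)

/-- Reachability along the rotors of an acyclic configuration is well founded. -/
theorem eq_empty_of_forall_rotor_mem {ρ : S.RConf} (hρ : S.IsAcyclicConf ρ) {s : Finset S.V0}
    (hs : ∀ w ∈ s, ∃ v ∈ s, S.head (ρ.1 w) = v.1) : s = ∅ := by
  let R : S.V0 → S.V0 → Prop := fun v w => TransGen (S.rotorRel ρ) w.1 v.1
  have : IsTrans S.V0 R := ⟨fun _ _ _ h₁ h₂ => h₂.trans h₁⟩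
  have : Std.Irrefl R := ⟨fun v => hρ v.1⟩
  by_contra hne
  obtain ⟨w, hw, hmin⟩ :=
    (Finite.wellFounded_of_trans_of_irrefl R).has_min (s : Set S.V0) (nonempty_iff_ne_empty.2 hne)
  obtain ⟨v, hv, hwv⟩ := hs w hw
  exact hmin v hv (.single ⟨w.2, hwv⟩)

theorem IsOdometer.eq_of_topplesTo {e m : S.PConf} {ρ : S.RConf} {t : S.State}
    (hm : S.TopplesTo e m 0) (ht : S.IsOdometer (e, ρ) (fun v => S.outdeg v.1 * m v) t) :
    t = (0, ρ) := by
  refine Prod.ext (funext fun v => ?_) (Subtype.ext (funext fun v => ?_))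
  · have h := ht.2 v
    have := hm v
    simp only [S.sent_outdeg_mul (ρ.2 _)] at h
    simp only [Pi.zero_apply, zero_add] at this ⊢
    omega
  · exact (ht.1 v).trans (S.iterate_outdeg_mul (ρ.2 v) _)

theorem sub_eq_sum_sent_of_isOdometer {e m n : S.PConf} {ρ : S.RConf} {t : S.State}
    (hm : S.TopplesTo e m 0) (hn : ∀ v, n v ≤ S.outdeg v.1 * m v) (ht : S.IsOdometer (e, ρ) n t)
    {v : S.V0} (hv : t.1 v = 0) :
    S.outdeg v.1 * m v - n v =
      ∑ w, S.sent (S.next^[n w] (ρ.1 w)) v.1 (S.outdeg w.1 * m w - n w) := by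
  have hsplit : ∀ w, m w * S.numArcs w.1 v.1 = S.sent (ρ.1 w) v.1 (n w) +
      S.sent (S.next^[n w] (ρ.1 w)) v.1 (S.outdeg w.1 * m w - n w) := fun w => by
    rw [← sent_add, Nat.add_sub_cancel' (hn w), S.sent_outdeg_mul (ρ.2 w)]
  have hfull := hm v
  have hnow := ht.2 v
  simp only [hsplit, sum_add_distrib, Pi.zero_apply, zero_add] at hfull
  simp only [hv, zero_add] at hnow
  omega

/-- Were all unfinished vertices out of chips, the firings they still owe would send every
chip back among them, the last one along the original rotor; so the rotors at unfinished
vertices would all point to unfinished vertices. -/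
theorem exists_pos_of_isOdometer {e m n : S.PConf} {ρ : S.RConf} {t : S.State}
    (hρ : S.IsAcyclicConf ρ) (hm : S.TopplesTo e m 0) (hn : ∀ v, n v ≤ S.outdeg v.1 * m v)
    (hne : ∃ v, n v < S.outdeg v.1 * m v) (ht : S.IsOdometer (e, ρ) n t) :
    ∃ v, n v < S.outdeg v.1 * m v ∧ 0 < t.1 v := by
  by_contra! hstuck
  set gap : S.V0 → ℕ := fun v => S.outdeg v.1 * m v - n v
  set a : S.V0 → E := fun w => S.next^[n w] (ρ.1 w)
  set U := univ.filter fun v => n v < S.outdeg v.1 * m v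
  have hgap : ∀ v ∈ U, gap v = ∑ w ∈ U, S.sent (a w) v.1 (gap w) := fun v hv => by
    have hv0 : t.1 v = 0 := Nat.eq_zero_of_le_zero (hstuck v (mem_filter.1 hv).2)
    refine (sub_eq_sum_sent_of_isOdometer hm hn ht hv0).trans ?_
    refine (sum_subset (subset_univ U) fun w _ hw => ?_).symm
    have : S.outdeg w.1 * m w - n w = 0 := by simp [U] at hw; omega
    rw [this, sent_zero]
  have htotal : ∑ w ∈ U, ∑ v ∈ U, S.sent (a w) v.1 (gap w) = ∑ w ∈ U, gap w := by
    rw [sum_comm]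
    exact (sum_congr rfl hgap).symm
  have hexact := (sum_eq_sum_iff_of_le fun w _ => S.sum_sent_le U (a w) (gap w)).1 htotal
  have hrotors : ∀ w ∈ U, ∃ v ∈ U, S.head (ρ.1 w) = v.1 := fun w hw => by
    have hpos : 0 < gap w := by simp [U, gap] at hw ⊢; omega
    obtain ⟨v, hv, hhead⟩ := S.exists_mem_head_eq_of_sum_sent_eq hpos (hexact w hw)
    refine ⟨v, hv, ?_⟩
    rwa [← iterate_add_apply, Nat.sub_add_cancel (hn w), S.iterate_outdeg_mul (ρ.2 w)] at hhead
  obtain ⟨v, hv⟩ := hne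
  have hU := eq_empty_of_forall_rotor_mem hρ hrotors
  exact eq_empty_iff_forall_notMem.1 hU v (mem_filter.2 ⟨mem_univ v, hv⟩)

theorem reach_zero_of_isAcyclicConf {e m : S.PConf} {ρ : S.RConf} (hρ : S.IsAcyclicConf ρ)
    (hm : S.TopplesTo e m 0) : ReflTransGen S.Fires (e, ρ) (0, ρ) := by
  set full : S.PConf := fun v => S.outdeg v.1 * m v
  suffices h : ∀ k n t, ∑ v, (full v - n v) = k → n ≤ full → S.IsOdometer (e, ρ) n t →
      ReflTransGen S.Fires t (0, ρ) from
    h _ 0 _ rfl (fun v => Nat.zero_le _) (isOdometer_zero _)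
  intro k
  induction k using Nat.strong_induction_on with
  | _ k ih =>
    intro n t hk hn ht
    by_cases hfull : n = full
    · subst hfull
      rw [ht.eq_of_topplesTo hm]
    · have hlt : ∃ v, n v < full v := by
        by_contra! h
        exact hfull (le_antisymm hn h)
      obtain ⟨v, hv, hpos⟩ := exists_pos_of_isOdometer hρ hm hn hlt ht
      have hn' : n + Pi.single v 1 ≤ full := fun u => by
        rcases eq_or_ne u v with rfl | hu
        · simpa using hv
        · simpa [hu] using hn u
      refine .head ⟨v, hpos, rfl⟩ (ih _ ?_ _ _ rfl hn' (ht.fire hpos))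
      rw [← hk]
      refine sum_lt_sum (fun u _ => Nat.sub_le_sub_left (by simp) _) ⟨v, mem_univ v, ?_⟩
      simp only [full, Pi.add_apply, Pi.single_eq_same] at hv ⊢
      omega

theorem act_eq_self_of_isAcyclicConf {e m : S.PConf} {ρ : S.RConf} (hρ : S.IsAcyclicConf ρ)
    (hm : S.TopplesTo e m 0) : S.act e ρ = ρ :=
  (eq_act_of_reach (reach_zero_of_isAcyclicConf hρ hm)).symm

theorem exists_topplesTo_zero_of_stabilize_add_self {e : S.PConf}
    (he : S.stabilize (e + e) = e) : ∃ m, S.TopplesTo e m 0 := by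
  obtain ⟨m, hm⟩ := exists_topplesTo_stabilize (e + e)
  refine ⟨m, fun v => ?_⟩
  have := hm v
  simp only [he, Pi.add_apply, Pi.zero_apply] at this ⊢
  omega

end RotorSystem

/-- **Theorem (unique acyclic configuration in each equivalence class).**
Each equivalence class of rotor configurations contains exactly one acyclic
(equivalently, recurrent) rotor configuration; the unique acyclic configuration
equivalent to `ρ` is `eρ`, where `e` is the identity of the sandpile group. -/
theorem unique_acyclic_in_class {V E : Type} [Fintype V] [DecidableEq V] [Fintype E]
    [DecidableEq E] (S : RotorSystem V E)
    (e : S.PConf) (he : S.IsSandpileIdentity e) (ρ : S.RConf) :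
    S.IsAcyclicConf (S.act e ρ) ∧ S.REquiv (S.act e ρ) ρ ∧
      ∀ ρ' : S.RConf, S.REquiv ρ' ρ → S.IsAcyclicConf ρ' → ρ' = S.act e ρ := by
  obtain ⟨hrec, hid⟩ := he
  have hee : S.stabilize (e + e) = e := hid e hrec
  obtain ⟨m, hm⟩ := RotorSystem.exists_topplesTo_zero_of_stabilize_add_self hee
  have hfactor : ∀ σ, ∃ τ, ∀ x, S.act e x = S.act τ (S.act σ x) := fun σ => by
    obtain ⟨τ, hτ⟩ := hrec.2 σ
    exact ⟨τ, fun x => by rw [hτ, S.act_stabilize, add_comm, S.act_add]⟩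
  refine ⟨?_, ⟨e, by rw [← S.act_add, ← S.act_stabilize, hee]⟩, ?_⟩
  · obtain ⟨τ, hτ⟩ := hrec.2 1
    rw [hτ, S.act_stabilize]
    exact RotorSystem.isAcyclicConf_act_of_pos (fun v => by simp) ρ
  · rintro ρ' ⟨σ, hσ⟩ hρ'
    obtain ⟨τ, hτ⟩ := hfactor σ
    rw [← RotorSystem.act_eq_self_of_isAcyclicConf hρ' hm, hτ, hτ, hσ]
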